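/- Consider the Evaluator Machine for □_{[t1,t2]} α (with t1 ≤ t2) whose queue Q evolves as: at each time step prepend M at index 0; if α fails at the current time, set all cells in index range [t1,t2] to ⊥; if α holds at the current time, set the cell at index t2 to ⊤ only if its current value is M; cells at indices > t2 are never modified. Then for all times i ≥ t2+1: Q^i[t2+1] = ⊤ iff for all j ∈ [i−t2−1+t1, i−1], α holds at time j in x; and Q^i[t2+1] = ⊥ otherwise. -/

import Mathlib

/-- Queue cell values: `⊤`, `⊥`, or `Maybe`. -/
inductive Cell : Type
  | top : Cell
  | bot : Cell
  | maybe : Cell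
deriving DecidableEq

/-- `run step i` is the queue contents after performing the steps of times `0, 1, …, i`
starting from the empty queue. -/
def run (step : ℕ → List Cell → List Cell) : ℕ → List Cell
  | 0 => step 0 []
  | i + 1 => step (i + 1) (run step i)

/-- Set every cell with index in `[a, b]` to `v`. -/
def setRange (a b : ℕ) (v : Cell) (q : List Cell) : List Cell :=
  q.mapIdx fun j c => if a ≤ j ∧ j ≤ b then v else c

/-- Set the cell at index `k` to `v`, but only if its current value is `Maybe`. -/
def setIfMaybe (k : ℕ) (v : Cell) (q : List Cell) : List Cell :=
  q.mapIdx fun j c => if j = k ∧ c = Cell.maybe then v else c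

/-- Set every cell with index in `[a, b]` whose current value is `Maybe` to `v`. -/
def setRangeIfMaybe (a b : ℕ) (v : Cell) (q : List Cell) : List Cell :=
  q.mapIdx fun j c => if (a ≤ j ∧ j ≤ b) ∧ c = Cell.maybe then v else c

/-- One step of the Evaluator Machine for `□_{[t1,t2]} α` at time `i`: prepend `Maybe`;
if `α` holds at time `i`, set the cell at index `t2` to `⊤` only if it is `Maybe`;
if `α` fails at time `i`, set all cells with indices in `[t1, t2]` to `⊥`.
Cells at indices `> t2` are never modified. -/
def boxStep (α : ℕ → Bool) (t1 t2 : ℕ) (i : ℕ) (q : List Cell) : List Cell :=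
  let q' := Cell.maybe :: q
  if α i then setIfMaybe t2 Cell.top q' else setRange t1 t2 Cell.bot q'


/-!
Follow each cell from the time `n` it is pushed: after the step of time `n + k` it sits at index
`k`, and for `k ≤ t2` it is `⊥` exactly when `α` has failed at some time of `[n + t1, n + k]`,
otherwise `⊤` if `k = t2` and `M` before. Beyond index `t2` it is frozen, so at time
`n + t2 + 1` the cell at index `t2 + 1` reports whether `α` holds on `[n + t1, n + t2]`.
-/

def cellStep (α : ℕ → Bool) (t1 t2 i k : ℕ) (c : Cell) : Cell :=
  if α i then (if k = t2 ∧ c = Cell.maybe then Cell.top else c)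
  else (if t1 ≤ k ∧ k ≤ t2 then Cell.bot else c)

def HoldsOn (α : ℕ → Bool) (a b : ℕ) : Prop := ∀ j, a ≤ j → j ≤ b → α j = true

open scoped Classical in
/-- The value of the cell pushed at time `n`, after the step of time `n + k`, for `k ≤ t2`. -/
noncomputable def boxCell (α : ℕ → Bool) (t1 t2 n k : ℕ) : Cell :=
  if HoldsOn α (n + t1) (n + k) then (if k = t2 then Cell.top else Cell.maybe) else Cell.bot

section HoldsOn

variable {α : ℕ → Bool} {a b : ℕ}

lemma HoldsOn.of_lt (h : b < a) : HoldsOn α a b := fun j ha hb => absurd (ha.trans hb) (by omega)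

lemma holdsOn_succ_right (h : a ≤ b + 1) :
    HoldsOn α a (b + 1) ↔ HoldsOn α a b ∧ α (b + 1) = true := by
  refine ⟨fun hab => ⟨fun j ha hb => hab j ha (by omega), hab _ h le_rfl⟩, ?_⟩
  rintro ⟨hab, hb⟩ j ha hj
  rcases Nat.lt_or_ge j (b + 1) with hj' | hj'
  · exact hab j ha (by omega)
  · rwa [show j = b + 1 by omega]

end HoldsOn

section BoxMachine

variable (α : ℕ → Bool) (t1 t2 : ℕ)

lemma boxStep_getElem? (i k : ℕ) (q : List Cell) :
    (boxStep α t1 t2 i q)[k]? = (Cell.maybe :: q)[k]?.map (cellStep α t1 t2 i k) := by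
  unfold boxStep cellStep
  cases α i <;> simp only [Bool.false_eq_true, if_true, if_false, setIfMaybe, setRange,
    List.getElem?_mapIdx]

lemma run_getElem?_zero (i : ℕ) :
    (run (boxStep α t1 t2) i)[0]? = some (cellStep α t1 t2 i 0 Cell.maybe) := by
  cases i <;> simp [run, boxStep_getElem?]

lemma run_getElem?_succ (i k : ℕ) :
    (run (boxStep α t1 t2) (i + 1))[k + 1]? =
      (run (boxStep α t1 t2) i)[k]?.map (cellStep α t1 t2 (i + 1) (k + 1)) := by
  simp [run, boxStep_getElem?]

lemma cellStep_of_lt {i k : ℕ} (hk : t2 < k) (c : Cell) : cellStep α t1 t2 i k c = c := by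
  unfold cellStep
  split_ifs <;> first | rfl | omega

variable {t1 t2}

lemma cellStep_maybe_eq_boxCell (h12 : t1 ≤ t2) (n : ℕ) :
    cellStep α t1 t2 n 0 Cell.maybe = boxCell α t1 t2 n 0 := by
  unfold cellStep boxCell
  rcases Nat.eq_zero_or_pos t1 with rfl | ht1
  · have hself : HoldsOn α n n ↔ α n = true := ⟨fun h => h n le_rfl le_rfl, fun h j h1 h2 => by
      rwa [show j = n by omega]⟩
    simp only [add_zero, hself]
    cases α n <;> simp
  · rw [if_pos (HoldsOn.of_lt (by omega)), if_neg (by omega : 0 ≠ t2)]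
    split_ifs <;> first | rfl | omega

lemma cellStep_boxCell_succ (h12 : t1 ≤ t2) {n k : ℕ} (hk : k + 1 ≤ t2) :
    cellStep α t1 t2 (n + k + 1) (k + 1) (boxCell α t1 t2 n k) = boxCell α t1 t2 n (k + 1) := by
  have hk' : k ≠ t2 := by omega
  unfold cellStep boxCell
  rw [if_neg hk']
  by_cases ht1 : t1 ≤ k + 1
  · rw [← add_assoc, holdsOn_succ_right (by omega)]
    by_cases hW : HoldsOn α (n + t1) (n + k) <;> cases hα : α (n + k + 1) <;>
      simp [hW, ht1, hk]
  · have hW : ∀ m ≤ k + 1, HoldsOn α (n + t1) (n + m) := fun m hm => HoldsOn.of_lt (by omega)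
    rw [if_pos (hW k (by omega)), if_pos (hW (k + 1) le_rfl), if_neg (by omega : k + 1 ≠ t2)]
    split_ifs <;> first | rfl | omega

lemma run_getElem?_eq_boxCell (h12 : t1 ≤ t2) (n : ℕ) {k : ℕ} (hk : k ≤ t2) :
    (run (boxStep α t1 t2) (n + k))[k]? = some (boxCell α t1 t2 n k) := by
  induction k with
  | zero => rw [run_getElem?_zero, cellStep_maybe_eq_boxCell α h12]; rfl
  | succ k ih =>
    rw [← add_assoc, run_getElem?_succ, ih (by omega), Option.map_some,
      cellStep_boxCell_succ α h12 hk]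

end BoxMachine

/-- Correctness of the Box Evaluator Machine: for all `i ≥ t2 + 1`, the cell at index
`t2 + 1` equals `⊤` iff `α` holds at every time `j ∈ [i − t2 − 1 + t1, i − 1]`
(i.e. `x^{i−t2−1} ⊨ □_{[t1,t2]} α`), and equals `⊥` otherwise. -/
theorem box_EM_correct (α : ℕ → Bool) (t1 t2 : ℕ) (h12 : t1 ≤ t2)
    (i : ℕ) (hi : t2 + 1 ≤ i) :
    ((run (boxStep α t1 t2) i)[t2 + 1]? = some Cell.top ↔
      ∀ j, i - t2 - 1 + t1 ≤ j → j ≤ i - 1 → α j = true) ∧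
    (¬ (∀ j, i - t2 - 1 + t1 ≤ j → j ≤ i - 1 → α j = true) →
      (run (boxStep α t1 t2) i)[t2 + 1]? = some Cell.bot) := by
  obtain ⟨n, rfl⟩ : ∃ n, i = n + t2 + 1 := ⟨i - t2 - 1, by omega⟩
  have hcell : (run (boxStep α t1 t2) (n + t2 + 1))[t2 + 1]? = some (boxCell α t1 t2 n t2) := by
    rw [run_getElem?_succ, run_getElem?_eq_boxCell α h12 n le_rfl, Option.map_some,
      cellStep_of_lt α t1 t2 (Nat.lt_succ_self t2)]
  have hwindow : (n + t2 + 1 - t2 - 1 + t1 = n + t1) ∧ n + t2 + 1 - 1 = n + t2 := by omega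
  rw [hcell, hwindow.1, hwindow.2]
  change (_ ↔ HoldsOn α _ _) ∧ (¬ HoldsOn α _ _ → _)
  by_cases h : HoldsOn α (n + t1) (n + t2) <;> simp [boxCell, h]
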